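/- Let R ⊆ R' be a finite extension of integral domains (R' is a domain, module-finite over R), M a finitely generated R-module, and X, Y closed subsets of 𝔸_M. Then X = Y if and only if the base changes X_{R'} and Y_{R'} are equal as closed subsets of 𝔸_{R'⊗M}. -/

import Mathlib

/-! An `R`-domain `D` embeds into the algebraically closed field `K = \overline{Frac D}`. By
lying-over, `p = ker (R → K)` is the contraction of a prime `q` of the integral extension `R'`,
and the integral extension `R/p ⊆ R'/q` embeds into `K` over `R/p`; so `K` is an `R'`-domain.
Since polynomial laws commute with base change and `R` is flat over itself, the injection
`D → K` both preserves and reflects the vanishing of a polynomial law, so `X(D) = Y(D)` follows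
from `X(K) = Y(K)`. -/

open scoped TensorProduct

universe u

/-- A polynomial law `M → N` over `R`: a family of maps `A ⊗[R] M → A ⊗[R] N`, one for every
commutative `R`-algebra `A`, commuting with base change along all `R`-algebra homomorphisms. -/
structure PolyLaw (R : Type u) [CommRing R] (M N : Type u)
    [AddCommGroup M] [Module R M] [AddCommGroup N] [Module R N] : Type (u + 1) where
  toFun : ∀ (A : Type u) [CommRing A] [Algebra R A], A ⊗[R] M → A ⊗[R] N
  isCompat : ∀ {A B : Type u} [CommRing A] [Algebra R A] [CommRing B] [Algebra R B]
      (φ : A →ₐ[R] B) (x : A ⊗[R] M),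
      LinearMap.rTensor N φ.toLinearMap (toFun A x) = toFun B (LinearMap.rTensor M φ.toLinearMap x)

namespace PolyLaw

variable {R : Type u} [CommRing R] {M N P : Type u}
  [AddCommGroup M] [Module R M] [AddCommGroup N] [Module R N] [AddCommGroup P] [Module R P]

theorem ext' {f g : PolyLaw R M N}
    (h : ∀ (A : Type u) [CommRing A] [Algebra R A] (x : A ⊗[R] M), f.toFun A x = g.toFun A x) :
    f = g := by
  cases f; cases g
  simp only [mk.injEq]
  funext A instA instB x
  exact h A x

/-- A polynomial law is homogeneous of degree `d` if `φ_A (a • m) = a ^ d • φ_A m` always. -/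
def IsHomogeneous (f : PolyLaw R M N) (d : ℕ) : Prop :=
  ∀ (A : Type u) [CommRing A] [Algebra R A] (a : A) (x : A ⊗[R] M),
    f.toFun A (a • x) = a ^ d • f.toFun A x

/-- The polynomial law induced by a linear map. -/
noncomputable def ofLinear (ψ : M →ₗ[R] N) : PolyLaw R M N where
  toFun A _ _ := LinearMap.lTensor A ψ
  isCompat φ x := by
    show LinearMap.rTensor N φ.toLinearMap (LinearMap.lTensor _ ψ x)
      = LinearMap.lTensor _ ψ (LinearMap.rTensor M φ.toLinearMap x)
    rw [← LinearMap.comp_apply, ← LinearMap.comp_apply,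
      LinearMap.rTensor_comp_lTensor, LinearMap.lTensor_comp_rTensor]

/-- Composition of polynomial laws. -/
def comp (g : PolyLaw R N P) (f : PolyLaw R M N) : PolyLaw R M P where
  toFun A _ _ x := g.toFun A (f.toFun A x)
  isCompat φ x := by rw [g.isCompat φ, f.isCompat φ]

/-- Translation by an element `u : N`, as a polynomial law `N → N`. -/
noncomputable def translation (u : N) : PolyLaw R N N where
  toFun A _ _ x := x + (1 : A) ⊗ₜ[R] u
  isCompat φ x := by
    simp [map_add, LinearMap.rTensor_tmul, map_one]

end PolyLaw

namespace PolyLaw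

variable {R : Type u} [CommRing R] {M N : Type u}
  [AddCommGroup M] [Module R M] [AddCommGroup N] [Module R N]

noncomputable instance : Zero (PolyLaw R M N) :=
  ⟨{ toFun := fun A _ _ _ => 0, isCompat := fun φ x => by simp }⟩

noncomputable instance : Add (PolyLaw R M N) :=
  ⟨fun f g =>
    { toFun := fun A _ _ x => f.toFun A x + g.toFun A x
      isCompat := fun φ x => by simp [map_add, f.isCompat, g.isCompat] }⟩

noncomputable instance : Neg (PolyLaw R M N) :=
  ⟨fun f =>
    { toFun := fun A _ _ x => - f.toFun A x
      isCompat := fun φ x => by simp [map_neg, f.isCompat] }⟩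

noncomputable instance : SMul R (PolyLaw R M N) :=
  ⟨fun r f =>
    { toFun := fun A _ _ x => r • f.toFun A x
      isCompat := fun φ x => by simp [map_smul, f.isCompat] }⟩

@[simp] lemma zero_toFun (A : Type u) [CommRing A] [Algebra R A] (x : A ⊗[R] M) :
    (0 : PolyLaw R M N).toFun A x = 0 := rfl

@[simp] lemma add_toFun (f g : PolyLaw R M N) (A : Type u) [CommRing A] [Algebra R A]
    (x : A ⊗[R] M) : (f + g).toFun A x = f.toFun A x + g.toFun A x := rfl

@[simp] lemma neg_toFun (f : PolyLaw R M N) (A : Type u) [CommRing A] [Algebra R A]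
    (x : A ⊗[R] M) : (-f).toFun A x = - f.toFun A x := rfl

@[simp] lemma smul_toFun (r : R) (f : PolyLaw R M N) (A : Type u) [CommRing A] [Algebra R A]
    (x : A ⊗[R] M) : (r • f).toFun A x = r • f.toFun A x := rfl

noncomputable instance : AddCommGroup (PolyLaw R M N) where
  add_assoc a b c := ext' (by intros; simp [add_assoc])
  zero_add a := ext' (by intros; simp)
  add_zero a := ext' (by intros; simp)
  add_comm a b := ext' (by intros; simp [add_comm])
  neg_add_cancel a := ext' (by intros; simp)
  nsmul := nsmulRec
  zsmul := zsmulRec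

noncomputable instance : Module R (PolyLaw R M N) where
  one_smul f := ext' (by intros; simp)
  mul_smul r s f := ext' (by intros; simp [mul_smul])
  smul_zero r := ext' (by intros; simp)
  smul_add r f g := ext' (by intros; simp)
  add_smul r s f := ext' (by intros; simp [add_smul])
  zero_smul f := ext' (by intros; simp)

lemma rTensor_eq_algMap {A B : Type u} [CommRing A] [Algebra R A] [CommRing B] [Algebra R B]
    (φ : A →ₐ[R] B) (x : A ⊗[R] R) :
    LinearMap.rTensor R φ.toLinearMap x = Algebra.TensorProduct.map φ (AlgHom.id R R) x := by
  induction x using TensorProduct.induction_on with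
  | zero => simp
  | tmul a r => simp
  | add x y hx hy => simp [map_add, hx, hy]

noncomputable instance : One (PolyLaw R M R) :=
  ⟨{ toFun := fun A _ _ _ => 1
     isCompat := fun φ x => by rw [rTensor_eq_algMap, map_one] }⟩

noncomputable instance : Mul (PolyLaw R M R) :=
  ⟨fun f g =>
    { toFun := fun A _ _ x => f.toFun A x * g.toFun A x
      isCompat := fun φ x => by
        rw [rTensor_eq_algMap, map_mul, ← rTensor_eq_algMap, ← rTensor_eq_algMap,
          f.isCompat, g.isCompat] }⟩

@[simp] lemma one_toFun (A : Type u) [CommRing A] [Algebra R A] (x : A ⊗[R] M) :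
    (1 : PolyLaw R M R).toFun A x = 1 := rfl

@[simp] lemma mul_toFun (f g : PolyLaw R M R) (A : Type u) [CommRing A] [Algebra R A]
    (x : A ⊗[R] M) : (f * g).toFun A x = f.toFun A x * g.toFun A x := rfl

noncomputable instance : CommRing (PolyLaw R M R) :=
  { (inferInstance : AddCommGroup (PolyLaw R M R)) with
    mul := (· * ·)
    one := 1
    mul_assoc := fun a b c => ext' (by intros; simp [mul_assoc])
    one_mul := fun a => ext' (by intros; simp)
    mul_one := fun a => ext' (by intros; simp)
    left_distrib := fun a b c => ext' (by intros; simp [mul_add])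
    right_distrib := fun a b c => ext' (by intros; simp [add_mul])
    mul_comm := fun a b => ext' (by intros; simp [mul_comm])
    zero_mul := fun a => ext' (by intros; simp)
    mul_zero := fun a => ext' (by intros; simp) }

noncomputable instance : Algebra R (PolyLaw R M R) :=
  Algebra.ofModule (fun r x y => ext' (by intros; simp [smul_mul_assoc]))
    (fun r x y => ext' (by intros; simp [mul_smul_comm]))

end PolyLaw

namespace PolyLaw

variable {R : Type u} [CommRing R] {M N : Type u}
  [AddCommGroup M] [Module R M] [AddCommGroup N] [Module R N]

theorem toFun_rTensor_eq_zero_iff [Module.Flat R N] (f : PolyLaw R M N) {A B : Type u}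
    [CommRing A] [Algebra R A] [CommRing B] [Algebra R B] {φ : A →ₐ[R] B}
    (hφ : Function.Injective φ) (x : A ⊗[R] M) :
    f.toFun B (φ.toLinearMap.rTensor M x) = 0 ↔ f.toFun A x = 0 := by
  rw [← f.isCompat]
  exact (Module.Flat.rTensor_preserves_injective_linearMap _ hφ).eq_iff' (map_zero _)

end PolyLaw

theorem RingHom.exists_comp_algebraMap_eq_of_isIntegral {R S K : Type*} [CommRing R] [CommRing S]
    [Algebra R S] [Algebra.IsIntegral R S] [Field K] [IsAlgClosed K] (f : R →+* K)
    (hf : RingHom.ker (algebraMap R S) ≤ RingHom.ker f) :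
    ∃ g : S →+* K, g.comp (algebraMap R S) = f := by
  have : (RingHom.ker f).IsPrime := RingHom.ker_isPrime f
  obtain ⟨Q, -, hQ, hQf⟩ :=
    Ideal.exists_ideal_over_prime_of_isIntegral (RingHom.ker f) (⊥ : Ideal S)
      (by rwa [← RingHom.ker_eq_comap_bot])
  have : Q.LiesOver (RingHom.ker f) := ⟨hQf.symm⟩
  let : Algebra (R ⧸ RingHom.ker f) K := f.kerLift.toAlgebra
  have : Module.IsTorsionFree (R ⧸ RingHom.ker f) K :=
    Module.isTorsionFree_iff_algebraMap_injective.mpr f.kerLift_injective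
  have : Module.IsTorsionFree (R ⧸ RingHom.ker f) (S ⧸ Q) :=
    Module.isTorsionFree_iff_algebraMap_injective.mpr (FaithfulSMul.algebraMap_injective _ _)
  let φ : S ⧸ Q →ₐ[R ⧸ RingHom.ker f] K := IsAlgClosed.lift
  refine ⟨φ.toRingHom.comp (Ideal.Quotient.mk Q), RingHom.ext fun r => ?_⟩
  exact (φ.commutes (Ideal.Quotient.mk _ r)).trans (f.kerLift_mk r)

theorem injective_algebraMap_algebraicClosure (D : Type*) [CommRing D] [IsDomain D] :
    Function.Injective (algebraMap D (AlgebraicClosure (FractionRing D))) := by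
  rw [IsScalarTower.algebraMap_eq D (FractionRing D)]
  exact (algebraMap (FractionRing D) _).injective.comp (IsFractionRing.injective D _)

open PolyLaw

section

variable (R : Type u) [CommRing R] (M : Type u) [AddCommGroup M] [Module R M]

/-- A rule assigning to every `R`-domain `D` a subset of `D ⊗ M`. -/
def AffRule : Type (u + 1) :=
  ∀ (D : Type u) [CommRing D] [IsDomain D] [Algebra R D], Set (D ⊗[R] M)

/-- The closed subset of `𝔸_M` cut out by a set `S` of polynomial laws `M → R`. -/
def vSet (S : Set (PolyLaw R M R)) : AffRule R M :=
  fun D _ _ _ => {m | ∀ f ∈ S, f.toFun D m = 0}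

variable {R M} in
theorem rTensor_mem_vSet_iff (S : Set (PolyLaw R M R)) {D D' : Type u}
    [CommRing D] [IsDomain D] [Algebra R D] [CommRing D'] [IsDomain D'] [Algebra R D']
    {φ : D →ₐ[R] D'} (hφ : Function.Injective φ) (m : D ⊗[R] M) :
    φ.toLinearMap.rTensor M m ∈ vSet R M S D' ↔ m ∈ vSet R M S D :=
  forall₂_congr fun f _ => f.toFun_rTensor_eq_zero_iff hφ m

theorem finite_extension_determines
    (R' : Type u) [CommRing R'] [Algebra R R']
    (hinj : Function.Injective (algebraMap R R')) [Module.Finite R R']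
    (X Y : AffRule R M) (hX : ∃ S, X = vSet R M S) (hY : ∃ T, Y = vSet R M T) :
    X = Y ↔
      ∀ (D : Type u) [CommRing D] [IsDomain D] [Algebra R' D],
        letI : Algebra R D := ((algebraMap R' D).comp (algebraMap R R')).toAlgebra
        X D = Y D := by
  refine ⟨fun hXY D _ _ _ => by rw [hXY], fun h => ?_⟩
  obtain ⟨S, rfl⟩ := hX
  obtain ⟨T, rfl⟩ := hY
  funext D _ _ _
  ext m
  have : Algebra.IsIntegral R R' := Algebra.IsIntegral.of_finite R R'
  let K := AlgebraicClosure (FractionRing D)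
  obtain ⟨g, hg⟩ :=
    ((algebraMap D K).comp (algebraMap R D)).exists_comp_algebraMap_eq_of_isIntegral
      (((RingHom.injective_iff_ker_eq_bot _).mp hinj).le.trans bot_le)
  let : Algebra R' K := g.toAlgebra
  -- overrides the `R`-algebra structure of `K` through `D`; `hg` says the two agree
  let : Algebra R K := (g.comp (algebraMap R R')).toAlgebra
  let ψ : D →ₐ[R] K :=
    { algebraMap D K with commutes' := fun r => (RingHom.congr_fun hg r).symm }
  have hψ : Function.Injective ψ := injective_algebraMap_algebraicClosure D
  rw [← rTensor_mem_vSet_iff S hψ, h K, rTensor_mem_vSet_iff T hψ]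

end
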